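/- Let H be an invertible n×n complex Hermitian matrix, let γ be an n×n matrix with real entries satisfying γ† = γ and γ² = 1, and let T be an n×n unitary matrix satisfying T H T⁻¹ = H* (time-reversal symmetry) and T γ = γ T. Then the operator V = γ · sgn(H) satisfies T V T⁻¹ = V*, where M* denotes entrywise complex conjugation. -/

import Mathlib

open Matrix
open scoped ComplexOrder

/-- The square root of a positive semidefinite matrix, as `Matrix.PosSemidef.sqrt` was defined
in the older Mathlib (that definition has since been removed). -/
noncomputable def Matrix.PosSemidef.sqrt {n : ℕ} {A : Matrix (Fin n) (Fin n) ℂ}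
    (hA : A.PosSemidef) : Matrix (Fin n) (Fin n) ℂ :=
  (hA.1.eigenvectorUnitary : Matrix (Fin n) (Fin n) ℂ) *
    diagonal ((↑) ∘ (√·) ∘ hA.1.eigenvalues) *
    (star hA.1.eigenvectorUnitary : Matrix (Fin n) (Fin n) ℂ)
/-- The matrix sign `sgn H = H * (√(H²))⁻¹` of a Hermitian matrix, where `√(H²)` is the
positive semidefinite square root of `H²`. -/
noncomputable def matrixSign {n : ℕ} (H : Matrix (Fin n) (Fin n) ℂ) (hH : H.IsHermitian) :
    Matrix (Fin n) (Fin n) ℂ :=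
  H * ((show (H * H).PosSemidef by
      simpa [hH.eq] using Matrix.posSemidef_conjTranspose_mul_self H).sqrt)⁻¹

/-! Conjugation by a unitary and entrywise complex conjugation are both ⋆-ring automorphisms of
the matrix algebra. A ⋆-ring isomorphism preserves positivity, so by uniqueness of positive square
roots it commutes with `√·`; it also commutes with inverses, hence maps `sgn H = H (√(H²))⁻¹` to
the sign of the image of `H`. Both automorphisms send `H` to `H*`, so `T sgn(H) T⁻¹ = sgn(H)*`,
and the real matrix `γ`, which commutes with `T`, passes through both sides. -/

open scoped MatrixOrder

section CFCSqrt

variable {A B F : Type*}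
  [PartialOrder A] [NonUnitalRing A] [TopologicalSpace A] [StarRing A] [Module ℝ A]
  [SMulCommClass ℝ A A] [IsScalarTower ℝ A A] [StarOrderedRing A]
  [NonUnitalContinuousFunctionalCalculus ℝ A IsSelfAdjoint] [NonnegSpectrumClass ℝ A]
  [IsSemitopologicalRing A] [T2Space A]
  [PartialOrder B] [NonUnitalRing B] [TopologicalSpace B] [StarRing B] [Module ℝ B]
  [SMulCommClass ℝ B B] [IsScalarTower ℝ B B] [StarOrderedRing B]
  [NonUnitalContinuousFunctionalCalculus ℝ B IsSelfAdjoint] [NonnegSpectrumClass ℝ B]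
  [IsSemitopologicalRing B] [T2Space B]

theorem map_cfcSqrt [FunLike F A B] [NonUnitalRingHomClass F A B]
    [NonUnitalStarRingHomClass F A B] (f : F) {a : A} (ha : 0 ≤ a) :
    f (CFC.sqrt a) = CFC.sqrt (f a) :=
  (CFC.sqrt_unique (by rw [← map_mul, CFC.sqrt_mul_sqrt_self a ha])
    (map_nonneg f (CFC.sqrt_nonneg a))).symm

end CFCSqrt

theorem map_ringInverse {M N F : Type*} [MonoidWithZero M] [MonoidWithZero N] [EquivLike F M N]
    [MulEquivClass F M N] (f : F) (x : M) : f (Ring.inverse x) = Ring.inverse (f x) := by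
  by_cases hx : IsUnit x
  · obtain ⟨u, rfl⟩ := hx
    change (f : M →* N) (Ring.inverse u) = Ring.inverse ((f : M →* N) u)
    rw [Ring.inverse_unit, ← Units.coe_map, ← Units.coe_map, Ring.inverse_unit, map_inv]
  · rw [Ring.inverse_non_unit x hx, Ring.inverse_non_unit (f x) (by simpa using hx), map_zero]

namespace Matrix

def conjStarRingEquiv (ι : Type*) [Fintype ι] [DecidableEq ι] :
    Matrix ι ι ℂ ≃⋆+* Matrix ι ι ℂ :=
  { (starRingAut : ℂ ≃+* ℂ).mapMatrix with
    map_star' := fun _ => (conjTranspose_map _ fun _ => rfl).symm }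

theorem PosSemidef.sqrt_eq_cfcSqrt {n : ℕ} {A : Matrix (Fin n) (Fin n) ℂ} (hA : A.PosSemidef) :
    hA.sqrt = CFC.sqrt A := by
  rw [CFC.sqrt_eq_cfc, cfc_nnreal_eq_real _ A hA.nonneg, hA.1.cfc_eq]
  simp only [IsHermitian.cfc, PosSemidef.sqrt, Unitary.conjStarAlgAut_apply]
  congr 3
  ext i
  simp [max_eq_left (hA.eigenvalues_nonneg i)]

theorem matrixSign_eq {n : ℕ} (H : Matrix (Fin n) (Fin n) ℂ) (hH : H.IsHermitian) :
    matrixSign H hH = H * Ring.inverse (CFC.sqrt (H * H)) := by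
  rw [matrixSign, nonsing_inv_eq_ringInverse, PosSemidef.sqrt_eq_cfcSqrt]

theorem map_matrixSign {n : ℕ} {F : Type*}
    [EquivLike F (Matrix (Fin n) (Fin n) ℂ) (Matrix (Fin n) (Fin n) ℂ)]
    [StarRingEquivClass F (Matrix (Fin n) (Fin n) ℂ) (Matrix (Fin n) (Fin n) ℂ)] (f : F)
    {H H' : Matrix (Fin n) (Fin n) ℂ} (hH : H.IsHermitian) (hH' : H'.IsHermitian) (h : f H = H') :
    f (matrixSign H hH) = matrixSign H' hH' := by
  subst h
  rw [matrixSign_eq, matrixSign_eq, map_mul, map_ringInverse,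
    map_cfcSqrt f hH.isSelfAdjoint.mul_self_nonneg, map_mul]

end Matrix

theorem stmt_11_general {n : ℕ} (H : Matrix (Fin n) (Fin n) ℂ)
    (hH : H.IsHermitian)
    (γ : Matrix (Fin n) (Fin n) ℂ) (hγreal : ∀ i j, (γ i j).im = 0)
    (T : Matrix (Fin n) (Fin n) ℂ) (hT : Tᴴ * T = 1 ∧ T * Tᴴ = 1)
    (hTH : T * H * T⁻¹ = H.map (starRingEnd ℂ)) (hTγ : T * γ = γ * T)
    (V : Matrix (Fin n) (Fin n) ℂ) (hV : V = γ * matrixSign H hH) :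
    T * V * T⁻¹ = V.map (starRingEnd ℂ) := by
  have hTinv : T⁻¹ = Tᴴ := inv_eq_right_inv hT.2
  let u : unitary (Matrix (Fin n) (Fin n) ℂ) := ⟨T, Unitary.mem_iff.mpr hT⟩
  have hHconj : (H.map (starRingEnd ℂ)).IsHermitian := hH.map _ fun _ => rfl
  have hsign : T * matrixSign H hH * T⁻¹ = (matrixSign H hH).map (starRingEnd ℂ) :=
    calc T * matrixSign H hH * T⁻¹ = Unitary.conjStarAlgAut ℂ _ u (matrixSign H hH) := by
          rw [hTinv]; rfl
      _ = matrixSign _ hHconj := map_matrixSign _ hH hHconj (by rw [← hTH, hTinv]; rfl)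
      _ = conjStarRingEquiv _ (matrixSign H hH) := (map_matrixSign _ hH hHconj rfl).symm
  have hγconj : γ.map (starRingEnd ℂ) = γ := by
    ext i j
    exact Complex.conj_eq_iff_im.mpr (hγreal i j)
  rw [hV, Matrix.map_mul, hγconj, ← hsign, ← Matrix.mul_assoc T γ, hTγ]
  simp only [Matrix.mul_assoc]

theorem stmt_11 {n : ℕ} (H : Matrix (Fin n) (Fin n) ℂ)
    (hH : H.IsHermitian) (hHinv : IsUnit H.det)
    (γ : Matrix (Fin n) (Fin n) ℂ) (hγreal : ∀ i j, (γ i j).im = 0)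
    (hγherm : γᴴ = γ) (hγ2 : γ * γ = 1)
    (T : Matrix (Fin n) (Fin n) ℂ) (hT : Tᴴ * T = 1 ∧ T * Tᴴ = 1)
    (hTH : T * H * T⁻¹ = H.map (starRingEnd ℂ)) (hTγ : T * γ = γ * T)
    (V : Matrix (Fin n) (Fin n) ℂ) (hV : V = γ * matrixSign H hH) :
    T * V * T⁻¹ = V.map (starRingEnd ℂ) :=
  stmt_11_general H hH γ hγreal T hT hTH hTγ V hV
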